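/- arXiv:1807.01590 — 3 statements merged into one kernel-verified Lean document; each statement's English description precedes it below -/
import Mathlib

section
/- Let K ⊆ ℝⁿ be a compact convex set with 0 in its interior whose gauge γ is strictly convex and continuously differentiable on ℝⁿ ∖ {0}, let U ⊆ ℝⁿ be a bounded open set with nonempty boundary, and let φ : ℝⁿ → ℝ be continuously differentiable and satisfy the strict Lipschitz property. Let x ∈ U. Then ρ is differentiable at x if and only if x has a unique ρ-closest point on ∂U; and in that case, if y denotes that unique ρ-closest point, ∇ρ(x) = ∇γ(x − y). In particular, in that case ∇ρ(x) ≠ 0. -/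
open Set Filter Topology MeasureTheory
open scoped NNReal

noncomputable section

abbrev Euc (n : ℕ) := EuclideanSpace ℝ (Fin n)

/-- The real inner product. -/
noncomputable def rinner {n : ℕ} (x y : Euc n) : ℝ := inner ℝ x y

/-- The polar set `K° = {x | ⟨x, y⟩ ≤ 1 for all y ∈ K}`. -/
def polarSet {n : ℕ} (K : Set (Euc n)) : Set (Euc n) :=
  {x | ∀ y ∈ K, rinner x y ≤ 1}

/-- `rho K U φ x = min_{y ∈ ∂U} (γ_K(x - y) + φ y)`. -/
noncomputable def rho {n : ℕ} (K U : Set (Euc n)) (φ : Euc n → ℝ) (x : Euc n) : ℝ :=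
  sInf ((fun y => gauge K (x - y) + φ y) '' frontier U)

/-- `rhoBar K U φ x = min_{y ∈ ∂U} (γ_K(y - x) - φ y)`. -/
noncomputable def rhoBar {n : ℕ} (K U : Set (Euc n)) (φ : Euc n → ℝ) (x : Euc n) : ℝ :=
  sInf ((fun y => gauge K (y - x) - φ y) '' frontier U)

/-- `φ` satisfies the strict Lipschitz property with respect to the gauge of `K`. -/
def StrictLipschitzWrt {n : ℕ} (K : Set (Euc n)) (φ : Euc n → ℝ) : Prop :=
  ∀ x y : Euc n, x ≠ y → -gauge K (y - x) < φ x - φ y ∧ φ x - φ y < gauge K (x - y)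

/-- The gauge of `K` is strictly convex: `γ(x+y) < γ(x) + γ(y)` unless
`x = c • y` or `y = c • x` for some `c ≥ 0`. -/
def StrictlyConvexGauge {n : ℕ} (K : Set (Euc n)) : Prop :=
  ∀ x y : Euc n, (¬ ∃ c : ℝ, 0 ≤ c ∧ (x = c • y ∨ y = c • x)) →
    gauge K (x + y) < gauge K x + gauge K y

/-!
For `y ∈ ∂U` the barrier `z ↦ γ(z - y) + φ y` lies above `ρ` and touches it at `x` when `y` is a
closest point, so a derivative of `ρ` at `x` equals `∇γ(x - y)` for every closest point `y`.
For two closest points, the supporting-hyperplane inequality of `γ` together with Euler's identity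
`∇γ(u)·u = γ(u)` gives `γ(u + v) ≥ γ(u) + γ(v)` for `u = x - y₁`, `v = x - y₂`; strict convexity
puts `u` and `v` on a common ray, and on a ray from `x` the strict Lipschitz property leaves room
for only one closest point. Conversely, if the closest point `y` is unique, the closest points `w`
of nearby `z` tend to `y`, the supporting hyperplane of `γ` at `x - w` gives
`ρ(z) ≥ ρ(x) + ∇γ(x - w)·(z - x)`, and continuity of `∇γ` matches this lower bound with the
barrier to first order. Euler's identity also gives `∇γ(x - y)·(x - y) = γ(x - y) > 0`.
-/

section NormedSpace

variable {E : Type*} [NormedAddCommGroup E] [NormedSpace ℝ E]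

lemma hasFDerivAt_of_eventually_le_of_eventually_ge {f g : E → ℝ} {L : E →L[ℝ] ℝ} {x : E}
    (hg : HasFDerivAt g L x) (hfg : ∀ᶠ z in 𝓝 x, f z ≤ g z) (hx : f x = g x)
    (hlow : ∀ ε > 0, ∀ᶠ z in 𝓝 x, f x + L (z - x) - ε * ‖z - x‖ ≤ f z) :
    HasFDerivAt f L x := by
  refine .of_isLittleO (Asymptotics.isLittleO_iff.2 fun ε hε => ?_)
  filter_upwards [hfg, hlow ε hε, Asymptotics.isLittleO_iff.1 hg.isLittleO hε]
    with z hle hge hup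
  rw [Real.norm_eq_abs, abs_le] at hup ⊢
  constructor <;> linarith [hup.2]

lemma HasFDerivAt.comp_sub_const_add_const {f : E → ℝ} {L : E →L[ℝ] ℝ} {x y : E}
    (hf : HasFDerivAt f L (x - y)) (c : ℝ) : HasFDerivAt (fun z => f (z - y) + c) L x := by
  simpa using (hf.comp x ((hasFDerivAt_id x).sub_const y)).add_const c

lemma ConvexOn.add_le_of_hasFDerivAt {f : E → ℝ} (hf : ConvexOn ℝ univ f)
    {L : E →L[ℝ] ℝ} {u : E} (hL : HasFDerivAt f L u) (w : E) :
    f u + L (w - u) ≤ f w := by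
  have hline : f ∘ AffineMap.lineMap u w = fun t : ℝ => f (u + t • (w - u)) := by
    ext t
    simp [AffineMap.lineMap_apply, add_comm]
  have hconv : ConvexOn ℝ univ fun t : ℝ => f (u + t • (w - u)) :=
    hline ▸ hf.comp_affineMap _
  have hderiv : HasDerivAt (fun t : ℝ => f (u + t • (w - u))) (L (w - u)) 0 := by
    have hlin : HasDerivAt (fun t : ℝ => u + t • (w - u)) (w - u) 0 := by
      simpa using ((hasDerivAt_id (0 : ℝ)).smul_const (w - u)).const_add u
    exact hL.comp_hasDerivAt_of_eq 0 hlin (by simp)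
  have := hconv.le_slope_of_hasDerivAt (mem_univ 0) (mem_univ 1) one_pos hderiv
  simp only [slope_def_field, zero_smul, one_smul, add_zero, add_sub_cancel, sub_zero,
    div_one] at this
  linarith

variable {K : Set E}

lemma convexOn_gauge (hKconv : Convex ℝ K) (hKabs : Absorbent ℝ K) :
    ConvexOn ℝ univ (gauge K) :=
  ⟨convex_univ, fun u _ v _ a b ha hb _ => by
    simpa only [gauge_smul_of_nonneg ha, gauge_smul_of_nonneg hb] using
      gauge_add_le hKconv hKabs (a • u) (b • v)⟩

lemma gauge_sub_le_gauge_sub (hKconv : Convex ℝ K) (hKabs : Absorbent ℝ K) (a b : E) :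
    gauge K a - gauge K b ≤ gauge K (a - b) := by
  simpa using gauge_add_le hKconv hKabs (a - b) b

lemma HasFDerivAt.apply_self_eq_gauge {L : E →L[ℝ] ℝ} {u : E}
    (hL : HasFDerivAt (gauge K) L u) : L u = gauge K u := by
  have hsmul : HasDerivAt (fun t : ℝ => t • u) u 1 := by
    simpa using (hasDerivAt_id (1 : ℝ)).smul_const u
  have hray : HasDerivAt (fun t : ℝ => gauge K (t • u)) (L u) 1 :=
    hL.comp_hasDerivAt_of_eq 1 hsmul (one_smul ℝ u).symm
  have hhom : (fun t : ℝ => t * gauge K u) =ᶠ[𝓝 1] fun t => gauge K (t • u) := by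
    filter_upwards [Ioi_mem_nhds one_pos] with t ht
    rw [gauge_smul_of_nonneg ht.le, smul_eq_mul]
  exact hray.unique ((hasDerivAt_mul_const (gauge K u)).congr_of_eventuallyEq hhom.symm)

lemma gauge_add_gauge_le_of_hasFDerivAt (hKconv : Convex ℝ K) (hKabs : Absorbent ℝ K)
    {L : E →L[ℝ] ℝ} {u v : E} (hu : HasFDerivAt (gauge K) L u)
    (hv : HasFDerivAt (gauge K) L v) : gauge K u + gauge K v ≤ gauge K (u + v) := by
  simpa [hv.apply_self_eq_gauge] using
    (convexOn_gauge hKconv hKabs).add_le_of_hasFDerivAt hu (u + v)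

lemma HasFDerivAt.ne_zero_of_gauge (hKabs : Absorbent ℝ K)
    (hKbdd : Bornology.IsBounded K) {L : E →L[ℝ] ℝ} {u : E}
    (hL : HasFDerivAt (gauge K) L u) (hu : u ≠ 0) : L ≠ 0 := by
  rintro rfl
  have hpos := (gauge_pos hKabs (NormedSpace.isVonNBounded_of_isBounded ℝ hKbdd)).2 hu
  simp [← hL.apply_self_eq_gauge] at hpos

end NormedSpace

section Euclidean

variable {n : ℕ} {K : Set (Euc n)}

lemma StrictlyConvexGauge.sameRay_of_hasFDerivAt (hKstrict : StrictlyConvexGauge K)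
    (hKconv : Convex ℝ K) (hKabs : Absorbent ℝ K) {L : Euc n →L[ℝ] ℝ} {u v : Euc n}
    (hu : HasFDerivAt (gauge K) L u) (hv : HasFDerivAt (gauge K) L v) : SameRay ℝ u v := by
  by_contra hnot
  refine (hKstrict u v ?_).not_ge (gauge_add_gauge_le_of_hasFDerivAt hKconv hKabs hu hv)
  rintro ⟨c, hc, rfl | rfl⟩
  · exact hnot (SameRay.sameRay_nonneg_smul_left v hc)
  · exact hnot (SameRay.sameRay_nonneg_smul_right u hc)

variable {φ : Euc n → ℝ}

lemma StrictLipschitzWrt.add_lt_add_of_sub_eq_smul (hφ : StrictLipschitzWrt K φ)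
    {x y₁ y₂ : Euc n} (hne : y₁ ≠ y₂) {c : ℝ} (hc : 1 ≤ c) (h : x - y₂ = c • (x - y₁)) :
    gauge K (x - y₁) + φ y₁ < gauge K (x - y₂) + φ y₂ := by
  -- `y₁` lies between `x` and `y₂`, so `γ(x - y₂) = γ(x - y₁) + γ(y₁ - y₂)`.
  have hy : y₁ - y₂ = (c - 1) • (x - y₁) := by
    rw [← sub_sub_sub_cancel_left y₂ y₁ x, h]
    module
  have hlip := (hφ y₁ y₂ hne).2
  rw [hy, gauge_smul_of_nonneg (sub_nonneg.2 hc), smul_eq_mul] at hlip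
  rw [h, gauge_smul_of_nonneg (zero_le_one.trans hc), smul_eq_mul]
  linarith

lemma StrictLipschitzWrt.eq_of_sameRay (hφ : StrictLipschitzWrt K φ) {x y₁ y₂ : Euc n}
    (hray : SameRay ℝ (x - y₁) (x - y₂)) (h₁ : x - y₁ ≠ 0) (h₂ : x - y₂ ≠ 0)
    (heq : gauge K (x - y₁) + φ y₁ = gauge K (x - y₂) + φ y₂) : y₁ = y₂ := by
  by_contra hne
  obtain ⟨r, hr, hrxy⟩ := hray.exists_pos_left h₁ h₂
  rcases le_total 1 r with hr1 | hr1
  · exact (hφ.add_lt_add_of_sub_eq_smul hne hr1 hrxy.symm).ne heq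
  · have hinv : x - y₁ = r⁻¹ • (x - y₂) := by rw [← hrxy, inv_smul_smul₀ hr.ne']
    exact (hφ.add_lt_add_of_sub_eq_smul (Ne.symm hne) ((one_le_inv₀ hr).2 hr1) hinv).ne heq.symm

end Euclidean

section Rho

variable {n : ℕ} {K U : Set (Euc n)} {φ : Euc n → ℝ}

lemma isLeast_rho (hKconv : Convex ℝ K) (hK0 : K ∈ 𝓝 0) (hφ : Continuous φ)
    (hU : IsCompact (frontier U)) (hUne : (frontier U).Nonempty) (x : Euc n) :
    IsLeast ((fun y => gauge K (x - y) + φ y) '' frontier U) (rho K U φ x) := by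
  have hcont : Continuous fun y => gauge K (x - y) + φ y := by
    have := continuous_gauge hKconv hK0
    fun_prop
  obtain ⟨y, hy, hmin⟩ := hU.exists_isMinOn hUne hcont.continuousOn
  have hleast : IsLeast ((fun y => gauge K (x - y) + φ y) '' frontier U)
      (gauge K (x - y) + φ y) := ⟨mem_image_of_mem _ hy, forall_mem_image.2 hmin⟩
  rwa [rho, hleast.csInf_eq]

lemma exists_rho_eq (hKconv : Convex ℝ K) (hK0 : K ∈ 𝓝 0) (hφ : Continuous φ)
    (hU : IsCompact (frontier U)) (hUne : (frontier U).Nonempty) (x : Euc n) :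
    ∃ y ∈ frontier U, rho K U φ x = gauge K (x - y) + φ y := by
  obtain ⟨y, hy, hxy⟩ := (isLeast_rho hKconv hK0 hφ hU hUne x).1
  exact ⟨y, hy, hxy.symm⟩

lemma rho_le (hKconv : Convex ℝ K) (hK0 : K ∈ 𝓝 0) (hφ : Continuous φ)
    (hU : IsCompact (frontier U)) (hUne : (frontier U).Nonempty) (x : Euc n) {y : Euc n}
    (hy : y ∈ frontier U) : rho K U φ x ≤ gauge K (x - y) + φ y :=
  (isLeast_rho hKconv hK0 hφ hU hUne x).2 (mem_image_of_mem _ hy)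

lemma rho_sub_rho_le (hKconv : Convex ℝ K) (hK0 : K ∈ 𝓝 0) (hφ : Continuous φ)
    (hU : IsCompact (frontier U)) (hUne : (frontier U).Nonempty) (x z : Euc n) :
    rho K U φ z - rho K U φ x ≤ gauge K (z - x) := by
  obtain ⟨y, hy, hxy⟩ := exists_rho_eq hKconv hK0 hφ hU hUne x
  have := gauge_sub_le_gauge_sub hKconv (absorbent_nhds_zero hK0) (z - y) (x - y)
  rw [sub_sub_sub_cancel_right] at this
  linarith [rho_le hKconv hK0 hφ hU hUne z hy]

lemma HasFDerivAt.rho_eq_of_hasFDerivAt_gauge (hKconv : Convex ℝ K) (hK0 : K ∈ 𝓝 0)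
    (hφ : Continuous φ) (hU : IsCompact (frontier U)) (hUne : (frontier U).Nonempty)
    {x y : Euc n} (hy : y ∈ frontier U) (hxy : rho K U φ x = gauge K (x - y) + φ y)
    {L L' : Euc n →L[ℝ] ℝ} (hρ : HasFDerivAt (rho K U φ) L x)
    (hγ : HasFDerivAt (gauge K) L' (x - y)) : L = L' := by
  have hmin : IsLocalMin (fun z => gauge K (z - y) + φ y - rho K U φ z) x :=
    .of_forall fun z => by simpa [hxy] using rho_le hKconv hK0 hφ hU hUne z hy
  have hbarrier := hγ.comp_sub_const_add_const (φ y)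
  exact (sub_eq_zero.1 (hmin.hasFDerivAt_eq_zero (hbarrier.sub hρ))).symm

lemma exists_gt_rho_of_unique_closest (hKconv : Convex ℝ K) (hK0 : K ∈ 𝓝 0)
    (hφ : Continuous φ) (hU : IsCompact (frontier U)) (hUne : (frontier U).Nonempty)
    {x y : Euc n} (huniq : ∀ w ∈ frontier U, rho K U φ x = gauge K (x - w) + φ w → w = y)
    {s : Set (Euc n)} (hs : IsOpen s) (hys : y ∈ s) :
    ∃ m > rho K U φ x, ∀ w ∈ frontier U \ s, m ≤ gauge K (x - w) + φ w := by
  rcases (frontier U \ s).eq_empty_or_nonempty with hS | hS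
  · exact ⟨rho K U φ x + 1, lt_add_one _, by simp [hS]⟩
  have hcont : Continuous fun w => gauge K (x - w) + φ w := by
    have := continuous_gauge hKconv hK0
    fun_prop
  obtain ⟨w₀, ⟨hw₀, hw₀s⟩, hmin⟩ := (hU.diff hs).exists_isMinOn hS hcont.continuousOn
  refine ⟨_, (rho_le hKconv hK0 hφ hU hUne x hw₀).lt_of_ne fun h => ?_, hmin⟩
  exact hw₀s (huniq w₀ hw₀ h ▸ hys)

lemma eventually_closest_mem_of_unique_closest (hKconv : Convex ℝ K) (hK0 : K ∈ 𝓝 0)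
    (hφ : Continuous φ) (hU : IsCompact (frontier U)) (hUne : (frontier U).Nonempty)
    {x y : Euc n} (huniq : ∀ w ∈ frontier U, rho K U φ x = gauge K (x - w) + φ w → w = y)
    {s : Set (Euc n)} (hs : s ∈ 𝓝 y) :
    ∀ᶠ z in 𝓝 x, ∀ w ∈ frontier U, rho K U φ z = gauge K (z - w) + φ w → w ∈ s := by
  obtain ⟨t, hts, ht, hyt⟩ := mem_nhds_iff.1 hs
  obtain ⟨m, hm, hgap⟩ := exists_gt_rho_of_unique_closest hKconv hK0 hφ hU hUne huniq ht hyt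
  have hsmall : Tendsto (fun z => gauge K (z - x) + gauge K (x - z)) (𝓝 x) (𝓝 0) := by
    have hcont : Continuous fun z => gauge K (z - x) + gauge K (x - z) := by
      have := continuous_gauge hKconv hK0
      fun_prop
    simpa using hcont.tendsto x
  filter_upwards [hsmall.eventually (gt_mem_nhds (sub_pos.2 hm))] with z hz w hw hzw
  by_contra hws
  have hmw := hgap w ⟨hw, fun hwt => hws (hts hwt)⟩
  have htri := gauge_sub_le_gauge_sub hKconv (absorbent_nhds_zero hK0) (x - w) (z - w)
  rw [sub_sub_sub_cancel_right] at htri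
  linarith [rho_sub_rho_le hKconv hK0 hφ hU hUne x z]

lemma rho_add_le_of_closest (hKconv : Convex ℝ K) (hK0 : K ∈ 𝓝 0) (hφ : Continuous φ)
    (hU : IsCompact (frontier U)) (hUne : (frontier U).Nonempty) {x z w : Euc n}
    (hw : w ∈ frontier U) (hzw : rho K U φ z = gauge K (z - w) + φ w) {L : Euc n →L[ℝ] ℝ}
    (hL : HasFDerivAt (gauge K) L (x - w)) : rho K U φ x + L (z - x) ≤ rho K U φ z := by
  have hsupp :=
    (convexOn_gauge hKconv (absorbent_nhds_zero hK0)).add_le_of_hasFDerivAt hL (z - w)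
  rw [sub_sub_sub_cancel_right] at hsupp
  linarith [rho_le hKconv hK0 hφ hU hUne x hw]

lemma hasFDerivAt_rho_of_unique_closest (hKconv : Convex ℝ K) (hK0 : K ∈ 𝓝 0)
    (hφ : Continuous φ) (hU : IsCompact (frontier U)) (hUne : (frontier U).Nonempty)
    {x y : Euc n} (hy : y ∈ frontier U) (hxy : rho K U φ x = gauge K (x - y) + φ y)
    (huniq : ∀ w ∈ frontier U, rho K U φ x = gauge K (x - w) + φ w → w = y)
    (hγ : ContDiffAt ℝ 1 (gauge K) (x - y)) :
    HasFDerivAt (rho K U φ) (fderiv ℝ (gauge K) (x - y)) x := by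
  set L := fderiv ℝ (gauge K) (x - y)
  refine hasFDerivAt_of_eventually_le_of_eventually_ge
    (((hγ.differentiableAt one_ne_zero).hasFDerivAt).comp_sub_const_add_const (φ y))
    (.of_forall fun z => rho_le hKconv hK0 hφ hU hUne z hy) hxy fun ε hε => ?_
  have hnear : ∀ᶠ u in 𝓝 (x - y), DifferentiableAt ℝ (gauge K) u ∧
      ‖fderiv ℝ (gauge K) u - L‖ < ε := by
    filter_upwards [hγ.eventually (by simp), (hγ.continuousAt_fderiv one_ne_zero).eventually
      (Metric.ball_mem_nhds L hε)] with u hu hLu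
    exact ⟨hu.differentiableAt one_ne_zero, by simpa [dist_eq_norm] using hLu⟩
  have hnear' : {w | DifferentiableAt ℝ (gauge K) (x - w) ∧
      ‖fderiv ℝ (gauge K) (x - w) - L‖ < ε} ∈ 𝓝 y :=
    (continuous_const.sub continuous_id).continuousAt.preimage_mem_nhds hnear
  filter_upwards [eventually_closest_mem_of_unique_closest hKconv hK0 hφ hU hUne huniq hnear']
    with z hz
  obtain ⟨w, hw, hzw⟩ := exists_rho_eq hKconv hK0 hφ hU hUne z
  obtain ⟨hdiff, hclose⟩ := hz w hw hzw
  have hlow := rho_add_le_of_closest hKconv hK0 hφ hU hUne hw hzw hdiff.hasFDerivAt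
  have hop := ((fderiv ℝ (gauge K) (x - w) - L).le_opNorm (z - x)).trans
    (mul_le_mul_of_nonneg_right hclose.le (norm_nonneg _))
  rw [sub_apply, Real.norm_eq_abs, abs_le] at hop
  linarith

end Rho

/-- `ρ` is differentiable at `x ∈ U` if and only if `x` has a unique
`ρ`-closest point `y` on `∂U`; and in that case `∇ρ(x) = ∇γ(x − y)`, which is nonzero. -/
theorem rho_differentiableAt_iff_unique_closest {n : ℕ}
    (K : Set (Euc n)) (hKcpt : IsCompact K) (hKconv : Convex ℝ K)
    (hK0 : (0 : Euc n) ∈ interior K) (hKstrict : StrictlyConvexGauge K)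
    (hKC1 : ContDiffOn ℝ 1 (gauge K) {(0 : Euc n)}ᶜ)
    (U : Set (Euc n)) (hUopen : IsOpen U) (hUbdd : Bornology.IsBounded U)
    (hUfr : (frontier U).Nonempty)
    (φ : Euc n → ℝ) (hφ : ContDiff ℝ 1 φ) (hφlip : StrictLipschitzWrt K φ)
    (x : Euc n) (hx : x ∈ U) :
    (DifferentiableAt ℝ (rho K U φ) x ↔
      (∃! y : Euc n, y ∈ frontier U ∧ rho K U φ x = gauge K (x - y) + φ y)) ∧
    (∀ y : Euc n, y ∈ frontier U → rho K U φ x = gauge K (x - y) + φ y →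
      DifferentiableAt ℝ (rho K U φ) x →
        gradient (rho K U φ) x = gradient (gauge K) (x - y) ∧
        gradient (rho K U φ) x ≠ 0) := by
  have hK0' : K ∈ 𝓝 0 := mem_interior_iff_mem_nhds.1 hK0
  have hKabs : Absorbent ℝ K := absorbent_nhds_zero hK0'
  have hφc : Continuous φ := hφ.continuous
  have hU : IsCompact (frontier U) :=
    hUbdd.isCompact_closure.of_isClosed_subset isClosed_frontier frontier_subset_closure
  have hne : ∀ y ∈ frontier U, x - y ≠ 0 := fun y hy =>
    sub_ne_zero.2 fun h => (hUopen.frontier_eq ▸ h ▸ hy).2 hx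
  have hγ : ∀ y ∈ frontier U, ContDiffAt ℝ 1 (gauge K) (x - y) := fun y hy =>
    hKC1.contDiffAt (isOpen_compl_singleton.mem_nhds (hne y hy))
  have hγ' : ∀ y ∈ frontier U, HasFDerivAt (gauge K) (fderiv ℝ (gauge K) (x - y)) (x - y) :=
    fun y hy => ((hγ y hy).differentiableAt one_ne_zero).hasFDerivAt
  have hfderiv : ∀ y ∈ frontier U, rho K U φ x = gauge K (x - y) + φ y →
      DifferentiableAt ℝ (rho K U φ) x → fderiv ℝ (rho K U φ) x = fderiv ℝ (gauge K) (x - y) :=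
    fun y hy hρy hρ =>
      hρ.hasFDerivAt.rho_eq_of_hasFDerivAt_gauge hKconv hK0' hφc hU hUfr hy hρy (hγ' y hy)
  refine ⟨⟨fun hρ => ?_, fun ⟨y, ⟨hy, hρy⟩, huniq⟩ => ?_⟩, fun y hy hρy hρ => ?_⟩
  · obtain ⟨y, hy, hρy⟩ := exists_rho_eq hKconv hK0' hφc hU hUfr x
    refine ⟨y, ⟨hy, hρy⟩, fun w ⟨hw, hρw⟩ => hφlip.eq_of_sameRay ?_ (hne w hw) (hne y hy)
      (hρw.symm.trans hρy)⟩
    exact hKstrict.sameRay_of_hasFDerivAt hKconv hKabs (hfderiv w hw hρw hρ ▸ hγ' w hw)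
      (hfderiv y hy hρy hρ ▸ hγ' y hy)
  · exact (hasFDerivAt_rho_of_unique_closest hKconv hK0' hφc hU hUfr hy hρy
      (fun w hw hρw => huniq w ⟨hw, hρw⟩) (hγ y hy)).differentiableAt
  · have hgrad : gradient (rho K U φ) x = gradient (gauge K) (x - y) := by
      rw [gradient, gradient, hfderiv y hy hρy hρ]
    refine ⟨hgrad, ?_⟩
    rw [hgrad, gradient, map_ne_zero_iff _ (LinearIsometryEquiv.injective _)]
    exact (hγ' y hy).ne_zero_of_gauge hKabs hKcpt.isBounded (hne y hy)
end
end

section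
/- Let K ⊆ ℝⁿ be a compact convex set with 0 in its interior, γ its gauge and K° its polar, let U ⊆ ℝⁿ be a bounded open set with nonempty boundary, and let φ : ℝⁿ → ℝ be continuous and satisfy the Lipschitz property −γ(y − x) ≤ φ(x) − φ(y) ≤ γ(x − y) for all x, y. Let v : closure(U) → ℝ be a Lipschitz function with v = φ on ∂U whose gradient satisfies ∇v(x) ∈ K° for almost every x ∈ U. Then −ρ̄(x) ≤ v(x) ≤ ρ(x) for every x ∈ closure(U). -/
open Set Filter Topology MeasureTheory
open scoped NNReal

noncomputable section

/-
Along a segment `[a, b] ⊆ U` the function `v` can increase by at most `γ(b - a)`, because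
`⟨∇v, b - a⟩ ≤ γ(b - a)` whenever `∇v ∈ K°`. Since `v` is only differentiable almost everywhere,
this is first proved on almost every parallel segment (disintegration of Haar measure along a
line, plus the fundamental theorem of calculus for Lipschitz functions) and then carried to
`[a, b]`, and to segments whose endpoints only lie in `closure U`, by continuity. Given `x ∈ U` and `z ∈ ∂U`, let `w` be the first point of `∂U` on the way
from `x` to `z`: then `v x - φ z ≤ γ(x - w) + γ(w - z) = γ(x - z)`, and symmetrically
`φ z - v x ≤ γ(z - x)`; taking the infimum over `z` gives both bounds.
-/

theorem AbsolutelyContinuousOnInterval.sub_le_of_ae_deriv_le {g : ℝ → ℝ} {a b c : ℝ}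
    (hab : a ≤ b) (hg : AbsolutelyContinuousOnInterval g a b)
    (h : ∀ᵐ t, t ∈ Icc a b → deriv g t ≤ c) : g b - g a ≤ c * (b - a) := by
  rw [← hg.integral_deriv_eq_sub]
  calc ∫ t in a..b, deriv g t ≤ ∫ _ in a..b, c :=
        intervalIntegral.integral_mono_ae_restrict hab hg.intervalIntegrable_deriv
          intervalIntegrable_const ((ae_restrict_iff' measurableSet_Icc).2 h)
    _ = c * (b - a) := by simp [mul_comm]

theorem gauge_sub_add_gauge_sub_of_mem_segment {E : Type*} [AddCommGroup E] [Module ℝ E]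
    (K : Set E) {x z w : E} (hw : w ∈ segment ℝ x z) :
    gauge K (x - w) + gauge K (w - z) = gauge K (x - z) := by
  rw [segment_eq_image'] at hw
  obtain ⟨θ, ⟨hθ0, hθ1⟩, rfl⟩ := hw
  have hxw : x - (x + θ • (z - x)) = θ • (x - z) := by module
  have hwz : x + θ • (z - x) - z = (1 - θ) • (x - z) := by module
  rw [hxw, hwz, gauge_smul_of_nonneg hθ0, gauge_smul_of_nonneg (sub_nonneg.2 hθ1), smul_eq_mul,
    smul_eq_mul, ← add_mul, add_sub_cancel, one_mul]

section TopologicalVectorSpace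

variable {E : Type*} [AddCommGroup E] [Module ℝ E] [TopologicalSpace E] [IsTopologicalAddGroup E]
  [ContinuousSMul ℝ E] {U : Set E}

theorem exists_mem_frontier_mem_segment_openSegment_subset (hU : IsOpen U) {x z : E}
    (hx : x ∈ U) (hz : z ∉ U) :
    ∃ w ∈ frontier U, w ∈ segment ℝ x z ∧ openSegment ℝ x w ⊆ U := by
  set p : ℝ → E := fun t => x + t • (z - x)
  set A : Set ℝ := Icc 0 1 ∩ p ⁻¹' Uᶜ
  have hA1 : (1 : ℝ) ∈ A := ⟨right_mem_Icc.2 zero_le_one, by simpa [p] using hz⟩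
  have hAbdd : BddBelow A := ⟨0, fun t ht => ht.1.1⟩
  have hTA : sInf A ∈ A :=
    (isClosed_Icc.inter (hU.isClosed_compl.preimage (by fun_prop))).csInf_mem ⟨1, hA1⟩ hAbdd
  set T := sInf A
  have hbefore : ∀ t ∈ Ico 0 T, p t ∈ U := fun t ht => by
    by_contra hpt
    exact (csInf_le hAbdd ⟨⟨ht.1, ht.2.le.trans hTA.1.2⟩, hpt⟩).not_gt ht.2
  have hsub : openSegment ℝ x (p T) ⊆ U := by
    rw [openSegment_eq_image']
    rintro _ ⟨θ, hθ, rfl⟩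
    show x + θ • (p T - x) ∈ U
    rw [show x + θ • (p T - x) = p (θ * T) by simp only [p, add_sub_cancel_left, smul_smul]]
    have hT : 0 < T := hTA.1.1.lt_of_ne fun h => hTA.2 (by simpa [p, ← h] using hx)
    exact hbefore _ ⟨by nlinarith [hθ.1], by nlinarith [hθ.2]⟩
  refine ⟨p T, ?_, segment_eq_image' ℝ x z ▸ mem_image_of_mem p hTA.1, hsub⟩
  rw [hU.frontier_eq]
  exact ⟨closure_mono hsub (segment_subset_closure_openSegment (right_mem_segment ℝ x _)), hTA.2⟩

theorem eventually_nhds_forall_add_smul_mem (hU : IsOpen U) {a b : E}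
    (hab : segment ℝ a b ⊆ U) :
    ∀ᶠ y in 𝓝 a, ∀ t ∈ Icc (0 : ℝ) 1, y + t • (b - a) ∈ U := by
  refine isCompact_Icc.eventually_forall_of_forall_eventually fun t ht => ?_
  have hcont : Continuous fun z : E × ℝ => z.1 + z.2 • (b - a) := by fun_prop
  exact hcont.continuousAt.eventually (hU.mem_nhds (hab (segment_eq_image' ℝ a b ▸ ⟨t, ht, rfl⟩)))

end TopologicalVectorSpace

theorem sub_le_of_ae_fderiv_le {E : Type*} [NormedAddCommGroup E] [NormedSpace ℝ E]
    {v : E → ℝ} {S : Set E} {L : ℝ≥0} (hv : LipschitzOnWith L v S)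
    {y u : E} (hS : ∀ t ∈ Icc (0 : ℝ) 1, y + t • u ∈ S) {c : ℝ}
    (h : ∀ᵐ t : ℝ, t ∈ Icc (0 : ℝ) 1 →
      DifferentiableAt ℝ v (y + t • u) ∧ fderiv ℝ v (y + t • u) u ≤ c) :
    v (y + u) - v y ≤ c := by
  have hline : LipschitzWith ‖u‖₊ (fun t : ℝ => y + t • u) :=
    LipschitzWith.of_dist_le_mul fun t s => by
      rw [dist_add_left, dist_eq_norm, ← sub_smul, norm_smul, mul_comm, Real.norm_eq_abs,
        ← Real.dist_eq, coe_nnnorm]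
  have hg : LipschitzOnWith (L * ‖u‖₊) (fun t : ℝ => v (y + t • u)) (uIcc 0 1) :=
    hv.comp hline.lipschitzOnWith fun t ht => hS t (by rwa [uIcc_of_le zero_le_one] at ht)
  have hftc := hg.absolutelyContinuousOnInterval.sub_le_of_ae_deriv_le zero_le_one (c := c) (by
    filter_upwards [h] with t ht htI
    obtain ⟨hdiff, hle⟩ := ht htI
    have hderiv : HasDerivAt (fun τ : ℝ => y + τ • u) u t := by
      simpa using ((hasDerivAt_id t).smul_const u).const_add y
    exact (hdiff.hasFDerivAt.comp_hasDerivAt t hderiv).deriv.trans_le hle)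
  simpa using hftc

section AddHaar

variable {E : Type*} [NormedAddCommGroup E] [NormedSpace ℝ E] [FiniteDimensional ℝ E]
  [MeasurableSpace E] [BorelSpace E] {μ : Measure E} [μ.IsAddHaarMeasure]

theorem ae_ae_add_smul {P : E → Prop} (h : ∀ᵐ x ∂μ, P x) (u : E) :
    ∀ᵐ y ∂μ, ∀ᵐ t : ℝ, P (y + t • u) := by
  set s := (toMeasurable μ {x | ¬P x})ᶜ
  have hs : ∀ᵐ x ∂μ, x ∈ s := by
    rw [ae_iff]
    simpa [s, measure_toMeasurable] using ae_iff.1 h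
  filter_upwards [(ae_ae_add_linearMap_mem_iff (LinearMap.toSpanSingleton ℝ E u) volume μ
    (measurableSet_toMeasurable μ _).compl).2 hs] with y hy
  filter_upwards [hy] with t ht
  by_contra hP
  exact ht (subset_toMeasurable μ _ (by simpa using hP))

theorem sub_le_of_segment_subset {U : Set E} (hU : IsOpen U) {v : E → ℝ} {L : ℝ≥0}
    (hv : LipschitzOnWith L v U) {p : E → ℝ}
    (hgrad : ∀ᵐ x ∂μ, x ∈ U → DifferentiableAt ℝ v x ∧ ∀ u, fderiv ℝ v x u ≤ p u)
    {a b : E} (hab : segment ℝ a b ⊆ U) : v b - v a ≤ p (b - a) := by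
  have hline_le : ∃ᶠ y in 𝓝 a, v (y + (b - a)) - v y ≤ p (b - a) := by
    have hdense : ∃ᶠ y in 𝓝 a, ∀ᵐ t : ℝ, y + t • (b - a) ∈ U →
        DifferentiableAt ℝ v (y + t • (b - a)) ∧ ∀ u, fderiv ℝ v (y + t • (b - a)) u ≤ p u :=
      mem_closure_iff_frequently.1 (Measure.dense_of_ae (ae_ae_add_smul hgrad (b - a)) a)
    refine (hdense.and_eventually (eventually_nhds_forall_add_smul_mem hU hab)).mono ?_
    rintro y ⟨hgood, hyU⟩
    refine sub_le_of_ae_fderiv_le hv hyU ?_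
    filter_upwards [hgood] with t ht htI
    obtain ⟨hdiff, hle⟩ := ht (hyU t htI)
    exact ⟨hdiff, hle _⟩
  have hcont : ContinuousAt (fun y => v (y + (b - a)) - v y) a := by
    have hvU : ∀ x ∈ U, ContinuousAt v x := fun x hx =>
      hv.continuousOn.continuousAt (hU.mem_nhds hx)
    refine ContinuousAt.sub ?_ (hvU a (hab (left_mem_segment ℝ a b)))
    refine ContinuousAt.comp (g := v) ?_ (continuous_add_const _).continuousAt
    rw [add_sub_cancel]
    exact hvU b (hab (right_mem_segment ℝ a b))
  simpa using isClosed_Iic.mem_of_frequently_of_tendsto hline_le hcont.tendsto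

theorem sub_le_gauge_of_openSegment_subset {U : Set E} (hU : IsOpen U) {v : E → ℝ} {L : ℝ≥0}
    (hv : LipschitzOnWith L v (closure U)) {K : Set E}
    (hgrad : ∀ᵐ x ∂μ, x ∈ U → DifferentiableAt ℝ v x ∧ ∀ u, fderiv ℝ v x u ≤ gauge K u)
    {a b : E} (ha : a ∈ closure U) (hb : b ∈ closure U) (hab : openSegment ℝ a b ⊆ U) :
    v b - v a ≤ gauge K (b - a) := by
  set c : ℝ → E := fun s => a + s • (b - a)
  have hc : ∀ s ∈ Ioo (0 : ℝ) 1, c s ∈ openSegment ℝ a b := fun s hs =>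
    openSegment_eq_image' ℝ a b ▸ mem_image_of_mem c hs
  have hle : ∀ s ∈ Ioo (0 : ℝ) (1 / 2), v (c (1 - s)) - v (c s) ≤ gauge K (b - a) := by
    intro s hs
    have hseg : segment ℝ (c s) (c (1 - s)) ⊆ U :=
      ((convex_openSegment a b).segment_subset (hc s ⟨hs.1, by linarith [hs.2]⟩)
        (hc (1 - s) ⟨by linarith [hs.2], by linarith [hs.1]⟩)).trans hab
    have hcs : c (1 - s) - c s = (1 - 2 * s) • (b - a) := by simp only [c]; module
    calc v (c (1 - s)) - v (c s) ≤ gauge K (c (1 - s) - c s) :=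
          sub_le_of_segment_subset hU (hv.mono subset_closure) hgrad hseg
      _ = (1 - 2 * s) * gauge K (b - a) := by
          rw [hcs, gauge_smul_of_nonneg (by linarith [hs.2]), smul_eq_mul]
      _ ≤ gauge K (b - a) := by nlinarith [gauge_nonneg (s := K) (b - a), hs.1]
  have hnear : ∀ᶠ s in 𝓝[>] (0 : ℝ),
      s ∈ Ioo 0 (1 / 2) ∧ c s ∈ closure U ∧ c (1 - s) ∈ closure U := by
    filter_upwards [Ioo_mem_nhdsGT (by norm_num : (0 : ℝ) < 1 / 2)] with s hs
    exact ⟨hs, subset_closure (hab (hc s ⟨hs.1, by linarith [hs.2]⟩)),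
      subset_closure (hab (hc (1 - s) ⟨by linarith [hs.2], by linarith [hs.1]⟩))⟩
  have hca : Tendsto c (𝓝[>] 0) (𝓝[closure U] a) := by
    refine tendsto_nhdsWithin_iff.2 ⟨?_, hnear.mono fun s hs => hs.2.1⟩
    have : Tendsto c (𝓝 0) (𝓝 (c 0)) := (by fun_prop : Continuous c).tendsto 0
    simpa [c] using this.mono_left nhdsWithin_le_nhds
  have hcb : Tendsto (fun s => c (1 - s)) (𝓝[>] 0) (𝓝[closure U] b) := by
    refine tendsto_nhdsWithin_iff.2 ⟨?_, hnear.mono fun s hs => hs.2.2⟩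
    have : Tendsto (fun s => c (1 - s)) (𝓝 0) (𝓝 (c (1 - 0))) :=
      (by fun_prop : Continuous fun s => c (1 - s)).tendsto 0
    simpa [c] using this.mono_left nhdsWithin_le_nhds
  exact le_of_tendsto (((hv.continuousOn b hb).tendsto.comp hcb).sub
    ((hv.continuousOn a ha).tendsto.comp hca)) (hnear.mono fun s hs => hle s hs.1)

theorem sub_le_gauge_of_mem_frontier {U : Set E} (hU : IsOpen U) {v : E → ℝ} {L : ℝ≥0}
    (hv : LipschitzOnWith L v (closure U)) {K : Set E}
    (hgrad : ∀ᵐ x ∂μ, x ∈ U → DifferentiableAt ℝ v x ∧ ∀ u, fderiv ℝ v x u ≤ gauge K u)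
    {φ : E → ℝ} (hφ : ∀ x y, φ x - φ y ≤ gauge K (x - y)) (hvφ : EqOn v φ (frontier U))
    {x z : E} (hx : x ∈ closure U) (hz : z ∈ frontier U) :
    v x - φ z ≤ gauge K (x - z) ∧ φ z - v x ≤ gauge K (z - x) := by
  by_cases hxU : x ∈ U
  · obtain ⟨w, hw, hwxz, hxwU⟩ :=
      exists_mem_frontier_mem_segment_openSegment_subset hU hxU (hU.frontier_eq ▸ hz).2
    have hvw := hvφ hw
    have hwx_le := sub_le_gauge_of_openSegment_subset hU hv hgrad (subset_closure hxU)
      (frontier_subset_closure hw) hxwU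
    have hxw_le := sub_le_gauge_of_openSegment_subset hU hv hgrad (frontier_subset_closure hw)
      (subset_closure hxU) (openSegment_symm ℝ x w ▸ hxwU)
    have hwzx : w ∈ segment ℝ z x := segment_symm ℝ x z ▸ hwxz
    constructor <;> linarith [hφ w z, hφ z w, gauge_sub_add_gauge_sub_of_mem_segment K hwxz,
      gauge_sub_add_gauge_sub_of_mem_segment K hwzx]
  · rw [hvφ (hU.frontier_eq ▸ ⟨hx, hxU⟩)]
    exact ⟨hφ x z, hφ z x⟩

end AddHaar

theorem rinner_le_gauge_of_mem_polarSet {n : ℕ} {K : Set (Euc n)} (hK : Absorbent ℝ K)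
    {w : Euc n} (hw : w ∈ polarSet K) (u : Euc n) : rinner w u ≤ gauge K u := by
  refine le_of_forall_gt fun r hr => ?_
  obtain ⟨b, hb, hbr, k, hk, rfl⟩ := exists_lt_of_gauge_lt hK hr
  calc rinner w (b • k) = b * rinner w k := real_inner_smul_right _ _ _
    _ ≤ b * 1 := mul_le_mul_of_nonneg_left (hw k hk) hb.le
    _ < r := by linarith

theorem admissible_between_obstacles_general {n : ℕ}
    (K : Set (Euc n))
    (hK0 : (0 : Euc n) ∈ interior K)
    (U : Set (Euc n)) (hUopen : IsOpen U)
    (hUfr : (frontier U).Nonempty)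
    (φ : Euc n → ℝ)
    (hφlip : ∀ x y : Euc n,
      -gauge K (y - x) ≤ φ x - φ y ∧ φ x - φ y ≤ gauge K (x - y))
    (v : Euc n → ℝ)
    (hvlip : ∃ L : ℝ≥0, LipschitzOnWith L v (closure U))
    (hvbd : EqOn v φ (frontier U))
    (hvgrad : ∀ᵐ x : Euc n, x ∈ U → DifferentiableAt ℝ v x ∧ gradient v x ∈ polarSet K) :
    ∀ x ∈ closure U, -(rhoBar K U φ x) ≤ v x ∧ v x ≤ rho K U φ x := by
  obtain ⟨L, hL⟩ := hvlip
  have hKabs : Absorbent ℝ K := absorbent_nhds_zero (mem_interior_iff_mem_nhds.1 hK0)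
  have hgrad : ∀ᵐ x : Euc n, x ∈ U →
      DifferentiableAt ℝ v x ∧ ∀ u, fderiv ℝ v x u ≤ gauge K u := by
    filter_upwards [hvgrad] with x hx hxU
    obtain ⟨hdiff, hpolar⟩ := hx hxU
    refine ⟨hdiff, fun u => ?_⟩
    simpa only [rinner, inner_gradient_left] using rinner_le_gauge_of_mem_polarSet hKabs hpolar u
  intro x hx
  have hbound := fun z (hz : z ∈ frontier U) =>
    sub_le_gauge_of_mem_frontier hUopen hL hgrad (fun x y => (hφlip x y).2) hvbd hx hz
  constructor
  · rw [neg_le, rhoBar]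
    refine le_csInf (hUfr.image _) ?_
    rintro _ ⟨z, hz, rfl⟩
    linarith [(hbound z hz).2]
  · refine le_csInf (hUfr.image _) ?_
    rintro _ ⟨z, hz, rfl⟩
    linarith [(hbound z hz).1]

/-- any Lipschitz function `v` on `closure U` equal to `φ` on `∂U` with
`∇v ∈ K°` a.e. in `U` is squeezed between the obstacles: `-ρ̄ ≤ v ≤ ρ` on `closure U`. -/
theorem admissible_between_obstacles {n : ℕ}
    (K : Set (Euc n)) (hKcpt : IsCompact K) (hKconv : Convex ℝ K)
    (hK0 : (0 : Euc n) ∈ interior K)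
    (U : Set (Euc n)) (hUopen : IsOpen U) (hUbdd : Bornology.IsBounded U)
    (hUfr : (frontier U).Nonempty)
    (φ : Euc n → ℝ) (hφcont : Continuous φ)
    (hφlip : ∀ x y : Euc n,
      -gauge K (y - x) ≤ φ x - φ y ∧ φ x - φ y ≤ gauge K (x - y))
    (v : Euc n → ℝ)
    (hvlip : ∃ L : ℝ≥0, LipschitzOnWith L v (closure U))
    (hvbd : EqOn v φ (frontier U))
    (hvgrad : ∀ᵐ x : Euc n, x ∈ U → DifferentiableAt ℝ v x ∧ gradient v x ∈ polarSet K) :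
    ∀ x ∈ closure U, -(rhoBar K U φ x) ≤ v x ∧ v x ≤ rho K U φ x :=
  admissible_between_obstacles_general K hK0 U hUopen hUfr φ hφlip v hvlip hvbd hvgrad
end
end

section
/- Let K ⊆ ℝⁿ be a compact convex set with 0 in its interior whose gauge γ is strictly convex, let U ⊆ ℝⁿ be a bounded open set with nonempty boundary, and let φ : ℝⁿ → ℝ be continuous and satisfy the strict Lipschitz property. Suppose y ∈ ∂U is a ρ-closest point to x ∈ U. Then for every z in the open segment (x, y) = {x + t(y − x) : 0 < t < 1}, y is the unique ρ-closest point to z on ∂U. -/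
open Set Filter Topology MeasureTheory
open scoped NNReal

noncomputable section

/-!
For `z` on the segment `[x, y]` the gauge is additive, `γ(x - y) = γ(x - z) + γ(z - y)`, so the
triangle inequality through `z` shows that `y` stays a `ρ`-closest point to `z`. If `y'` is another
one, the same chain of inequalities becomes a chain of equalities; strict convexity then puts `y'`
on the ray from `x` through `y`, and along that ray the strict Lipschitz property forbids two
points with equal value of `γ(x - ·) + φ`.
-/

section Gauge

variable {E : Type*} [AddCommGroup E] [Module ℝ E] {K : Set E}

lemma gauge_sub_le_gauge_sub_add (hconv : Convex ℝ K) (habs : Absorbent ℝ K) (a b c : E) :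
    gauge K (a - c) ≤ gauge K (a - b) + gauge K (b - c) := by
  simpa using gauge_add_le hconv habs (a - b) (b - c)

lemma gauge_sub_add_smul_sub (x y : E) {t : ℝ} (ht : 0 ≤ t) :
    gauge K (x - (x + t • (y - x))) = t * gauge K (x - y) := by
  rw [show x - (x + t • (y - x)) = t • (x - y) by module, gauge_smul_of_nonneg ht, smul_eq_mul]

lemma gauge_add_smul_sub_sub (x y : E) {t : ℝ} (ht : t ≤ 1) :
    gauge K (x + t • (y - x) - y) = (1 - t) * gauge K (x - y) := by
  rw [show x + t • (y - x) - y = (1 - t) • (x - y) by module,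
    gauge_smul_of_nonneg (sub_nonneg.2 ht), smul_eq_mul]

lemma gauge_sub_add_le_of_mem_segment (hconv : Convex ℝ K) (habs : Absorbent ℝ K)
    {x y w : E} {p q t : ℝ} (ht₀ : 0 ≤ t) (ht₁ : t ≤ 1)
    (h : gauge K (x - y) + p ≤ gauge K (x - w) + q) :
    gauge K (x + t • (y - x) - y) + p ≤ gauge K (x + t • (y - x) - w) + q := by
  have htri := gauge_sub_le_gauge_sub_add hconv habs x (x + t • (y - x)) w
  rw [gauge_sub_add_smul_sub x y ht₀] at htri
  rw [gauge_add_smul_sub_sub x y ht₁]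
  linarith

end Gauge

section Closest

variable {n : ℕ} {K U : Set (Euc n)} {φ : Euc n → ℝ}

lemma StrictlyConvexGauge.exists_nonneg_smul_of_gauge_add_eq (hK : StrictlyConvexGauge K)
    {a b : Euc n} (ha : a ≠ 0) (h : gauge K (a + b) = gauge K a + gauge K b) :
    ∃ d : ℝ, 0 ≤ d ∧ b = d • a := by
  obtain ⟨c, hc, hab | hba⟩ : ∃ c : ℝ, 0 ≤ c ∧ (a = c • b ∨ b = c • a) := by
    by_contra hnot
    exact (hK a b hnot).ne h
  · have hc0 : c ≠ 0 := by
      rintro rfl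
      exact ha (by simpa using hab)
    exact ⟨c⁻¹, inv_nonneg.2 hc, by rw [hab, inv_smul_smul₀ hc0]⟩
  · exact ⟨c, hc, hba⟩

namespace StrictLipschitzWrt

lemma le_gauge_sub_add (hφ : StrictLipschitzWrt K φ) (v w : Euc n) :
    φ v ≤ gauge K (v - w) + φ w := by
  rcases eq_or_ne w v with rfl | hne
  · simp
  · linarith [(hφ w v hne).1]

lemma eq_of_gauge_sub_le (hφ : StrictLipschitzWrt K φ) {p q : Euc n}
    (h : gauge K (p - q) ≤ φ p - φ q) : p = q := by
  by_contra hne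
  linarith [(hφ p q hne).2]

lemma eq_of_sub_eq_smul (hφ : StrictLipschitzWrt K φ) {x y y' : Euc n} {s : ℝ} (hs : 0 ≤ s)
    (hy' : x - y' = s • (x - y)) (h : gauge K (x - y') + φ y' = gauge K (x - y) + φ y) :
    y' = y := by
  have hg : gauge K (x - y') = s * gauge K (x - y) := by
    rw [hy', gauge_smul_of_nonneg hs, smul_eq_mul]
  rcases le_total s 1 with hs1 | hs1
  · refine hφ.eq_of_gauge_sub_le ?_
    have hdiff : y' - y = (1 - s) • (x - y) := by
      rw [sub_smul, one_smul, ← hy']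
      abel
    rw [hdiff, gauge_smul_of_nonneg (sub_nonneg.2 hs1), smul_eq_mul]
    linarith
  · refine (hφ.eq_of_gauge_sub_le ?_).symm
    have hdiff : y - y' = (s - 1) • (x - y) := by
      rw [sub_smul, one_smul, ← hy']
      abel
    rw [hdiff, gauge_smul_of_nonneg (sub_nonneg.2 hs1), smul_eq_mul]
    linarith

end StrictLipschitzWrt

lemma rho_le_s13 (hφ : StrictLipschitzWrt K φ) {w : Euc n} (hw : w ∈ frontier U) (v : Euc n) :
    rho K U φ v ≤ gauge K (v - w) + φ w :=
  csInf_le ⟨φ v, by rintro _ ⟨w', -, rfl⟩; exact hφ.le_gauge_sub_add v w'⟩ ⟨w, hw, rfl⟩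

lemma rho_eq_iff_forall_le (hφ : StrictLipschitzWrt K φ) {v y : Euc n} (hy : y ∈ frontier U) :
    rho K U φ v = gauge K (v - y) + φ y ↔
      ∀ w ∈ frontier U, gauge K (v - y) + φ y ≤ gauge K (v - w) + φ w := by
  refine ⟨fun h w hw => h ▸ rho_le_s13 hφ hw v, fun h => ?_⟩
  refine le_antisymm (rho_le_s13 hφ hy v) (le_csInf ⟨_, y, hy, rfl⟩ ?_)
  rintro _ ⟨w, hw, rfl⟩
  exact h w hw

lemma eq_of_gauge_sub_add_eq_of_mem_segment (hK : StrictlyConvexGauge K) (hconv : Convex ℝ K)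
    (habs : Absorbent ℝ K) (hφ : StrictLipschitzWrt K φ) {x y y' : Euc n} (hxy : x ≠ y)
    {t : ℝ} (ht₀ : 0 < t) (ht₁ : t ≤ 1)
    (hx : gauge K (x - y) + φ y ≤ gauge K (x - y') + φ y')
    (hz : gauge K (x + t • (y - x) - y') + φ y' = gauge K (x + t • (y - x) - y) + φ y) :
    y' = y := by
  set z := x + t • (y - x)
  have hxz : x - z = t • (x - y) := by module
  have hseg : gauge K (x - y) = gauge K (x - z) + gauge K (z - y) := by
    rw [gauge_sub_add_smul_sub x y ht₀.le, gauge_add_smul_sub_sub x y ht₁]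
    ring
  have htri := gauge_sub_le_gauge_sub_add hconv habs x z y'
  have hadd : gauge K ((x - z) + (z - y')) = gauge K (x - z) + gauge K (z - y') := by
    rw [sub_add_sub_cancel]
    linarith
  obtain ⟨d, hd, hzy'⟩ := hK.exists_nonneg_smul_of_gauge_add_eq
    (hxz ▸ smul_ne_zero ht₀.ne' (sub_ne_zero.2 hxy)) hadd
  refine hφ.eq_of_sub_eq_smul (x := x) (s := (1 + d) * t) (by positivity) ?_ (by linarith)
  rw [← sub_add_sub_cancel x z y', hzy', hxz]
  module

end Closest

theorem unique_closest_on_open_segment_general {n : ℕ}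
    (K : Set (Euc n)) (hKconv : Convex ℝ K)
    (hK0 : (0 : Euc n) ∈ interior K) (hKstrict : StrictlyConvexGauge K)
    (U : Set (Euc n)) (hUopen : IsOpen U)
    (φ : Euc n → ℝ) (hφlip : StrictLipschitzWrt K φ)
    (x : Euc n) (hx : x ∈ U)
    (y : Euc n) (hy : y ∈ frontier U)
    (hclosest : rho K U φ x = gauge K (x - y) + φ y) :
    ∀ t : ℝ, 0 < t → t < 1 →
      (rho K U φ (x + t • (y - x)) = gauge K ((x + t • (y - x)) - y) + φ y) ∧
      (∀ y' : Euc n, y' ∈ frontier U →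
        rho K U φ (x + t • (y - x)) = gauge K ((x + t • (y - x)) - y') + φ y' →
        y' = y) := by
  have habs : Absorbent ℝ K := absorbent_nhds_zero (mem_interior_iff_mem_nhds.1 hK0)
  have hxy : x ≠ y := fun h => (hUopen.frontier_eq ▸ hy).2 (h ▸ hx)
  have hmin := (rho_eq_iff_forall_le hφlip hy).1 hclosest
  intro t ht₀ ht₁
  have hz : rho K U φ (x + t • (y - x)) = gauge K ((x + t • (y - x)) - y) + φ y :=
    (rho_eq_iff_forall_le hφlip hy).2 fun w hw =>
      gauge_sub_add_le_of_mem_segment hKconv habs ht₀.le ht₁.le (hmin w hw)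
  refine ⟨hz, fun y' hy' hz' => ?_⟩
  exact eq_of_gauge_sub_add_eq_of_mem_segment hKstrict hKconv habs hφlip hxy ht₀ ht₁.le
    (hmin y' hy') (hz'.symm.trans hz)

/-- when the gauge is strictly convex and `φ` is strictly Lipschitz, a
`ρ`-closest point `y` to `x ∈ U` is the *unique* `ρ`-closest point to every point of
the open segment `(x, y)`. -/
theorem unique_closest_on_open_segment {n : ℕ}
    (K : Set (Euc n)) (hKcpt : IsCompact K) (hKconv : Convex ℝ K)
    (hK0 : (0 : Euc n) ∈ interior K) (hKstrict : StrictlyConvexGauge K)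
    (U : Set (Euc n)) (hUopen : IsOpen U) (hUbdd : Bornology.IsBounded U)
    (hUfr : (frontier U).Nonempty)
    (φ : Euc n → ℝ) (hφcont : Continuous φ) (hφlip : StrictLipschitzWrt K φ)
    (x : Euc n) (hx : x ∈ U)
    (y : Euc n) (hy : y ∈ frontier U)
    (hclosest : rho K U φ x = gauge K (x - y) + φ y) :
    ∀ t : ℝ, 0 < t → t < 1 →
      (rho K U φ (x + t • (y - x)) = gauge K ((x + t • (y - x)) - y) + φ y) ∧
      (∀ y' : Euc n, y' ∈ frontier U →
        rho K U φ (x + t • (y - x)) = gauge K ((x + t • (y - x)) - y') + φ y' →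
        y' = y) :=
  unique_closest_on_open_segment_general K hKconv hK0 hKstrict U hUopen φ hφlip x hx y hy hclosest
end
end
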